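/- arXiv:1804.06009 — 3 statements merged into one kernel-verified Lean document; each statement's English description precedes it below -/
import Mathlib

section
/- Let G be a connected graph with m edges and let e = uv be an edge. Then (m_u(e|G) − m_v(e|G))² ≤ (m − 1)², with equality if and only if e is a pendant edge (i.e., u or v has degree 1). -/
open scoped Classical
open Finset

noncomputable def eDist {V : Type*} (G : SimpleGraph V) (f : Sym2 V) (w : V) : ℕ :=
  Sym2.lift ⟨fun a b => min (G.dist a w) (G.dist b w), fun _ _ => min_comm _ _⟩ f

noncomputable def mCloser {V : Type*} (G : SimpleGraph V) [Fintype V] (u v : V) : ℕ :=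
  (G.edgeFinset.filter fun f => eDist G f u < eDist G f v).card

noncomputable def mEqui {V : Type*} (G : SimpleGraph V) [Fintype V] (u v : V) : ℕ :=
  (G.edgeFinset.filter fun f => eDist G f u = eDist G f v).card

/-- The edge revised Szeged index (each edge `uv` is counted once; the double sum over
ordered adjacent pairs counts it twice, whence the division by 2). -/
noncomputable def szRevE {V : Type*} (G : SimpleGraph V) [Fintype V] : ℚ :=
  (∑ u : V, ∑ v : V, if G.Adj u v then
      ((mCloser G u v : ℚ) + (mEqui G u v : ℚ) / 2) *
        ((mCloser G v u : ℚ) + (mEqui G u v : ℚ) / 2)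
    else 0) / 2

lemma eDist_mk {V : Type*} (G : SimpleGraph V) (a b w : V) :
    eDist G s(a, b) w = min (G.dist a w) (G.dist b w) := rfl

lemma mCloser_add_le {V : Type*} [Fintype V] (G : SimpleGraph V) (u v : V)
    (huv : G.Adj u v) :
    mCloser G u v + mCloser G v u ≤ G.edgeFinset.card - 1 := by
  classical
  have he : s(u, v) ∈ G.edgeFinset := by
    rw [SimpleGraph.mem_edgeFinset, SimpleGraph.mem_edgeSet]; exact huv
  have h0u : eDist G s(u, v) u = 0 := by simp [eDist_mk]
  have h0v : eDist G s(u, v) v = 0 := by simp [eDist_mk]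
  have hdisj : Disjoint (G.edgeFinset.filter fun f => eDist G f u < eDist G f v)
      (G.edgeFinset.filter fun f => eDist G f v < eDist G f u) := by
    rw [Finset.disjoint_left]
    intro f h1 h2
    simp only [Finset.mem_filter] at h1 h2
    omega
  have hsub : (G.edgeFinset.filter fun f => eDist G f u < eDist G f v) ∪
      (G.edgeFinset.filter fun f => eDist G f v < eDist G f u) ⊆
      G.edgeFinset.erase s(u, v) := by
    intro f hf
    simp only [Finset.mem_union, Finset.mem_filter] at hf
    rcases hf with ⟨hf, hlt⟩ | ⟨hf, hlt⟩ <;>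
    · refine Finset.mem_erase.2 ⟨?_, hf⟩
      rintro rfl
      rw [h0u, h0v] at hlt
      exact lt_irrefl _ hlt
  calc mCloser G u v + mCloser G v u
      = ((G.edgeFinset.filter fun f => eDist G f u < eDist G f v) ∪
        (G.edgeFinset.filter fun f => eDist G f v < eDist G f u)).card :=
        (Finset.card_union_of_disjoint hdisj).symm
    _ ≤ (G.edgeFinset.erase s(u, v)).card := Finset.card_le_card hsub
    _ = G.edgeFinset.card - 1 := Finset.card_erase_of_mem he

lemma adj_eq_of_degree_one {V : Type*} [Fintype V] {G : SimpleGraph V} {u v : V}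
    (huv : G.Adj u v) (hd : G.degree u = 1) : ∀ y, G.Adj u y → y = v := by
  have hv : v ∈ G.neighborFinset u := (G.mem_neighborFinset u v).2 huv
  have hcard : (G.neighborFinset u).card = 1 := hd
  obtain ⟨a, ha⟩ := Finset.card_eq_one.1 hcard
  rw [ha, Finset.mem_singleton] at hv
  subst hv
  intro y hy
  have : y ∈ G.neighborFinset u := (G.mem_neighborFinset u y).2 hy
  rw [ha, Finset.mem_singleton] at this
  exact this

lemma dist_succ_of_degree_one {V : Type*} [Fintype V] {G : SimpleGraph V}
    (hG : G.Connected) {u v : V} (huv : G.Adj u v) (hd : G.degree u = 1)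
    {x : V} (hx : x ≠ u) : G.dist x u = G.dist x v + 1 := by
  have hAdj := adj_eq_of_degree_one huv hd
  have h1 : G.dist x u ≤ G.dist x v + 1 := by
    obtain ⟨p, hp⟩ := hG.exists_walk_length_eq_dist x v
    have := SimpleGraph.dist_le (p.concat huv.symm)
    rwa [SimpleGraph.Walk.length_concat, hp] at this
  have h2 : G.dist x v + 1 ≤ G.dist x u := by
    obtain ⟨p, hp⟩ := hG.exists_walk_length_eq_dist x u
    obtain ⟨y, hy, q, hq⟩ := SimpleGraph.Walk.exists_eq_cons_of_ne (Ne.symm hx) p.reverse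
    have hyv : y = v := hAdj y hy
    have hlen : q.length + 1 = G.dist x u := by
      have h := congrArg SimpleGraph.Walk.length hq
      rw [SimpleGraph.Walk.length_reverse, SimpleGraph.Walk.length_cons] at h
      omega
    have hqd : G.dist x v ≤ q.length := by
      rw [← hyv, SimpleGraph.dist_comm]
      exact SimpleGraph.dist_le q
    omega
  omega

lemma pendant_counts {V : Type*} [Fintype V] {G : SimpleGraph V}
    (hG : G.Connected) {u v : V} (huv : G.Adj u v) (hd : G.degree u = 1) :
    mCloser G u v = 0 ∧ mCloser G v u = G.edgeFinset.card - 1 := by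
  classical
  have hAdj := adj_eq_of_degree_one huv hd
  have he : s(u, v) ∈ G.edgeFinset := by
    rw [SimpleGraph.mem_edgeFinset, SimpleGraph.mem_edgeSet]; exact huv
  have key : ∀ f ∈ G.edgeFinset, f ≠ s(u, v) → eDist G f v < eDist G f u := by
    intro f hf hne
    induction f using Sym2.ind with
    | _ a b =>
      have hab : G.Adj a b := by
        rwa [SimpleGraph.mem_edgeFinset, SimpleGraph.mem_edgeSet] at hf
      have ha : a ≠ u := by
        rintro rfl
        exact hne (by rw [hAdj b hab])
      have hb : b ≠ u := by
        rintro rfl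
        refine hne ?_
        rw [hAdj a hab.symm, Sym2.eq_swap]
      rw [eDist_mk, eDist_mk, dist_succ_of_degree_one hG huv hd ha,
        dist_succ_of_degree_one hG huv hd hb]
      omega
  constructor
  · rw [mCloser, Finset.card_eq_zero, Finset.filter_eq_empty_iff]
    intro f hf
    by_cases hne : f = s(u, v)
    · subst hne
      simp only [eDist_mk, SimpleGraph.dist_self]
      omega
    · have := key f hf hne; omega
  · rw [mCloser]
    have : (G.edgeFinset.filter fun f => eDist G f v < eDist G f u) =
        G.edgeFinset.erase s(u, v) := by
      ext f
      simp only [Finset.mem_filter, Finset.mem_erase]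
      constructor
      · rintro ⟨hf, hlt⟩
        refine ⟨?_, hf⟩
        rintro rfl
        simp only [eDist_mk, SimpleGraph.dist_self] at hlt
        omega
      · rintro ⟨hne, hf⟩
        exact ⟨hf, key f hf hne⟩
    rw [this, Finset.card_erase_of_mem he]

lemma degree_one_of_full {V : Type*} [Fintype V] {G : SimpleGraph V}
    {u v : V} (huv : G.Adj u v)
    (ha : mCloser G u v = G.edgeFinset.card - 1) : G.degree v = 1 := by
  classical
  by_contra hdv
  have hu : u ∈ G.neighborFinset v := (G.mem_neighborFinset v u).2 huv.symm
  have h1 : 1 ≤ (G.neighborFinset v).card := Finset.card_pos.2 ⟨u, hu⟩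
  have h2 : 1 < (G.neighborFinset v).card := by
    rcases lt_or_eq_of_le h1 with h | h
    · exact h
    · exact absurd h.symm hdv
  obtain ⟨w, hw, hwu⟩ := Finset.exists_mem_ne h2 u
  rw [SimpleGraph.mem_neighborFinset] at hw
  have he : s(u, v) ∈ G.edgeFinset := by
    rw [SimpleGraph.mem_edgeFinset, SimpleGraph.mem_edgeSet]; exact huv
  have hfE : s(v, w) ∈ G.edgeFinset := by
    rw [SimpleGraph.mem_edgeFinset, SimpleGraph.mem_edgeSet]; exact hw
  have hfne : s(v, w) ≠ s(u, v) := by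
    intro h
    rw [Sym2.eq_iff] at h
    rcases h with ⟨h1', _⟩ | ⟨_, h2'⟩
    · exact huv.ne h1'.symm
    · exact hwu h2'
  have hsub : (G.edgeFinset.filter fun f => eDist G f u < eDist G f v) ⊆
      (G.edgeFinset.erase s(u, v)).erase s(v, w) := by
    intro f hf
    simp only [Finset.mem_filter] at hf
    obtain ⟨hfE', hlt⟩ := hf
    refine Finset.mem_erase.2 ⟨?_, Finset.mem_erase.2 ⟨?_, hfE'⟩⟩
    · rintro rfl
      simp only [eDist_mk, SimpleGraph.dist_self] at hlt
      omega
    · rintro rfl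
      simp only [eDist_mk, SimpleGraph.dist_self] at hlt
      omega
  have hcard := Finset.card_le_card hsub
  have hfe' : s(v, w) ∈ G.edgeFinset.erase s(u, v) := Finset.mem_erase.2 ⟨hfne, hfE⟩
  have h1' : 1 ≤ (G.edgeFinset.erase s(u, v)).card := Finset.card_pos.2 ⟨_, hfe'⟩
  rw [Finset.card_erase_of_mem hfe', Finset.card_erase_of_mem he] at hcard
  rw [mCloser] at ha
  have hm : 1 ≤ G.edgeFinset.card := Finset.card_pos.2 ⟨_, he⟩
  rw [Finset.card_erase_of_mem he] at h1'
  omega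

/-- `(m_u(e|G) − m_v(e|G))² ≤ (m − 1)²`, with equality iff `e = uv` is a
pendant edge (i.e. `u` or `v` has degree 1). -/
theorem stmt4 {V : Type*} [Fintype V] (G : SimpleGraph V) (hG : G.Connected)
    (u v : V) (huv : G.Adj u v) :
    ((mCloser G u v : ℤ) - (mCloser G v u : ℤ)) ^ 2 ≤ ((G.edgeFinset.card : ℤ) - 1) ^ 2 ∧
      (((mCloser G u v : ℤ) - (mCloser G v u : ℤ)) ^ 2 = ((G.edgeFinset.card : ℤ) - 1) ^ 2 ↔
        G.degree u = 1 ∨ G.degree v = 1) := by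
  classical
  have he : s(u, v) ∈ G.edgeFinset := by
    rw [SimpleGraph.mem_edgeFinset, SimpleGraph.mem_edgeSet]; exact huv
  have hm : 1 ≤ G.edgeFinset.card := Finset.card_pos.2 ⟨_, he⟩
  have hab := mCloser_add_le G u v huv
  set a := mCloser G u v with hadef
  set b := mCloser G v u with hbdef
  set m := G.edgeFinset.card with hmdef
  have habZ : (a : ℤ) + (b : ℤ) ≤ (m : ℤ) - 1 := by
    have : ((a + b : ℕ) : ℤ) ≤ ((m - 1 : ℕ) : ℤ) := by exact_mod_cast hab
    push_cast [Nat.cast_sub hm] at this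
    omega
  have haZ : (0 : ℤ) ≤ a := Int.natCast_nonneg a
  have hbZ : (0 : ℤ) ≤ b := Int.natCast_nonneg b
  have hineq : ((a : ℤ) - b) ^ 2 ≤ ((m : ℤ) - 1) ^ 2 :=
    sq_le_sq' (by linarith) (by linarith)
  refine ⟨hineq, ?_, ?_⟩
  · intro heq
    -- from equality, a = 0 ∨ b = 0 and a + b = m - 1
    have hfac : ((a : ℤ) - b) ^ 2 = ((m : ℤ) - 1) ^ 2 := heq
    have habs : (a : ℤ) - b = (m : ℤ) - 1 ∨ (a : ℤ) - b = -((m : ℤ) - 1) := by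
      have h := sq_eq_sq_iff_eq_or_eq_neg (R := ℚ) (a := ((a : ℚ) - b)) (b := ((m : ℚ) - 1))
      have hq : ((a : ℚ) - b) ^ 2 = ((m : ℚ) - 1) ^ 2 := by exact_mod_cast hfac
      rcases h.1 hq with h' | h'
      · left; exact_mod_cast h'
      · right; exact_mod_cast h'
    rcases habs with h' | h'
    · -- a - b = m - 1, so b = 0, a = m - 1
      have hb0 : b = 0 := by omega
      have ham : (a : ℤ) = (m : ℤ) - 1 := by omega
      have ham' : a = m - 1 := by omega
      right
      exact degree_one_of_full huv ham'
    · -- b - a = m - 1, so a = 0, b = m - 1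
      have ha0 : a = 0 := by omega
      have hbm : (b : ℤ) = (m : ℤ) - 1 := by omega
      have hbm' : b = m - 1 := by omega
      left
      exact degree_one_of_full huv.symm hbm'
  · rintro (hd | hd)
    · obtain ⟨h0, h1⟩ := pendant_counts hG huv hd
      have h0' : a = 0 := h0
      have h1' : b = m - 1 := h1
      rw [h0', h1']
      push_cast [Nat.cast_sub hm]
      ring
    · obtain ⟨h0, h1⟩ := pendant_counts hG huv.symm hd
      have h0' : b = 0 := h0
      have h1' : a = m - 1 := h1
      rw [h0', h1']
      push_cast [Nat.cast_sub hm]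
      ring
end

section
/- Let G be a connected graph containing an even cycle C_{2k} = u_1u_2⋯u_{2k}u_1 such that G − E(C_{2k}) has exactly 2k connected components, with G_i the component containing u_i and m_i = |E(G_i)|. Then for each edge u_iu_{i+1} of the cycle (indices mod 2k), the set M_{u_i}(u_iu_{i+1}|G) equals E(G_i) ∪ E(G_{i−1}) ∪ ⋯ ∪ E(G_{i−k+1}) together with the k−1 cycle edges {u_iu_{i−1}, u_{i−1}u_{i−2}, …, u_{i−k+2}u_{i−k+1}}, and symmetrically for M_{u_{i+1}}. -/
/-!
Let `H` be `G` with the cycle edges deleted. The `H`-components are reached from the cycle and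
there are exactly `2k` of them, so every vertex `x` lies in the `H`-component of exactly one cycle
vertex `u a`. A shortest path from `x` to `u j` runs inside that component to `u a` and then along
the cycle, so `d_G(x, u j) = d_H(x, u a) + |j - a|` with `|·|` the cyclic distance on
`ZMod (2k)`; the reverse inequality holds because `d_H(·, u a) + |j - a|` drops by at most one
along each edge of a walk. Comparing distances to `u i` and `u (i + 1)` is then arithmetic in
`ZMod (2k)`, and the statement for `u (i + 1)` is the one for `u i` on the reversed cycle.
-/

open scoped Classical
open Finset

/-- The edges of `G` lying in the connected component `c`. -/
noncomputable def compEdges {V : Type*} (G : SimpleGraph V) [Fintype V]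
    (c : G.ConnectedComponent) : Finset (Sym2 V) :=
  G.edgeFinset.filter fun f => ∀ x ∈ f, G.connectedComponentMk x = c

namespace ZMod

variable {n : ℕ} [NeZero n]

lemma val_add_one_eq_ite (d : ZMod n) :
    (d + 1).val = if d.val + 1 = n then 0 else d.val + 1 := by
  have hd := d.val_lt
  have hcast : d + 1 = ((d.val + 1 : ℕ) : ZMod n) := by simp
  rw [hcast, val_natCast]
  split_ifs with h
  · simp [h]
  · exact Nat.mod_eq_of_lt (by omega)

lemma natAbs_valMinAbs_add_one_le (d : ZMod n) :
    (d + 1).valMinAbs.natAbs ≤ d.valMinAbs.natAbs + 1 := by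
  have h1 : (1 : ZMod n).valMinAbs.natAbs ≤ 1 := by
    rw [valMinAbs_natAbs_eq_min, val_one_eq_one_mod]
    exact (min_le_left _ _).trans (Nat.mod_le _ _)
  exact (natAbs_valMinAbs_add_le d 1).trans ((Int.natAbs_add_le _ _).trans (by omega))

lemma natAbs_valMinAbs_le_add_one (d : ZMod n) :
    d.valMinAbs.natAbs ≤ (d + 1).valMinAbs.natAbs + 1 := by
  have h := natAbs_valMinAbs_add_one_le (-(d + 1))
  rwa [show -(d + 1) + 1 = -d by ring, natAbs_valMinAbs_neg, natAbs_valMinAbs_neg] at h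

variable {k : ℕ} [NeZero k]

lemma natAbs_valMinAbs_lt_add_one_iff (d : ZMod (2 * k)) :
    d.valMinAbs.natAbs < (d + 1).valMinAbs.natAbs ↔ d.val < k := by
  have hd := d.val_lt
  rw [valMinAbs_natAbs_eq_min, valMinAbs_natAbs_eq_min, val_add_one_eq_ite]
  split_ifs <;> omega

lemma min_natAbs_valMinAbs_lt_iff (d : ZMod (2 * k)) :
    min d.valMinAbs.natAbs (d - 1).valMinAbs.natAbs <
        min (d + 1).valMinAbs.natAbs d.valMinAbs.natAbs ↔ 1 ≤ d.val ∧ d.val < k := by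
  obtain ⟨e, rfl⟩ : ∃ e, d = e + 1 := ⟨d - 1, by ring⟩
  have he := e.val_lt
  simp only [add_sub_cancel_right, valMinAbs_natAbs_eq_min, val_add_one_eq_ite]
  split_ifs <;> omega

end ZMod

section

variable {V : Type*} {n : ℕ}

def cycleEdgeSet (u : ZMod n → V) : Set (Sym2 V) := {f | ∃ i, f = s(u i, u (i + 1))}

lemma cycleEdgeSet_comp_neg (u : ZMod n → V) :
    cycleEdgeSet (fun j => u (-j)) = cycleEdgeSet u := by
  ext f
  constructor
  · rintro ⟨j, rfl⟩
    exact ⟨-j - 1, by dsimp only; rw [Sym2.eq_swap]; congr 2 <;> ring⟩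
  · rintro ⟨j, rfl⟩
    exact ⟨-j - 1, by rw [Sym2.eq_swap]; congr 2 <;> ring⟩

namespace SimpleGraph

variable {G : SimpleGraph V} {u : ZMod n → V}

lemma dist_cycle_add_intCast_le (hadj : ∀ i, G.Adj (u i) (u (i + 1))) (a : ZMod n) (z : ℤ) :
    G.dist (u a) (u (a + z)) ≤ z.natAbs := by
  have forward : ∀ (b : ZMod n) (m : ℕ), G.dist (u b) (u (b + m)) ≤ m := by
    intro b m
    induction m with
    | zero => simp
    | succ m ih =>
      have hstep := (hadj (b + m)).reachable.dist_triangle_right (u b)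
      rw [dist_eq_one_iff_adj.mpr (hadj (b + m))] at hstep
      rw [Nat.cast_succ, ← add_assoc]
      omega
  obtain ⟨m, rfl | rfl⟩ := Int.eq_nat_or_neg z
  · exact_mod_cast forward a m
  · have h := forward (a - m) m
    rw [dist_comm, sub_add_cancel] at h
    simpa [sub_eq_add_neg] using h

lemma dist_cycle_le_natAbs_valMinAbs (hadj : ∀ i, G.Adj (u i) (u (i + 1))) (a b : ZMod n) :
    G.dist (u a) (u b) ≤ (b - a).valMinAbs.natAbs := by
  simpa using dist_cycle_add_intCast_le hadj a (b - a).valMinAbs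

lemma exists_reachable_deleteEdges_cycleEdgeSet (hG : G.Connected) (x : V) :
    ∃ j, (G.deleteEdges (cycleEdgeSet u)).Reachable x (u j) := by
  suffices h : ∀ {y : V} (p : G.Walk x y) (j : ZMod n), y = u j →
      ∃ j, (G.deleteEdges (cycleEdgeSet u)).Reachable x (u j) from
    (hG x (u 0)).elim fun p => h p 0 rfl
  intro y p
  induction p with
  | nil => exact fun j hj => ⟨j, hj ▸ .rfl⟩
  | @cons x y z hxy p ih =>
    intro j hj
    by_cases hS : s(x, y) ∈ cycleEdgeSet u
    · obtain ⟨b, hb⟩ := hS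
      rcases Sym2.eq_iff.mp hb with ⟨rfl, -⟩ | ⟨rfl, -⟩
      exacts [⟨b, .rfl⟩, ⟨b + 1, .rfl⟩]
    · obtain ⟨j', hj'⟩ := ih j hj
      exact ⟨j', (deleteEdges_adj.mpr ⟨hxy, hS⟩).reachable.trans hj'⟩

variable [NeZero n]

lemma eq_of_reachable_deleteEdges_cycleEdgeSet (hG : G.Connected)
    (hcomp : Nat.card (G.deleteEdges (cycleEdgeSet u)).ConnectedComponent = n) {a b : ZMod n}
    (hab : (G.deleteEdges (cycleEdgeSet u)).Reachable (u a) (u b)) : a = b := by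
  have hsurj : Function.Surjective
      fun j => (G.deleteEdges (cycleEdgeSet u)).connectedComponentMk (u j) := by
    refine ConnectedComponent.ind fun x => ?_
    obtain ⟨j, hj⟩ := exists_reachable_deleteEdges_cycleEdgeSet hG x
    exact ⟨j, ConnectedComponent.sound hj.symm⟩
  have hbij := (Nat.bijective_iff_surjective_and_card _).mpr
    ⟨hsurj, by rw [Nat.card_zmod, hcomp]⟩
  exact hbij.injective (ConnectedComponent.sound hab)

lemma add_natAbs_valMinAbs_le_length (hG : G.Connected)
    (hcomp : Nat.card (G.deleteEdges (cycleEdgeSet u)).ConnectedComponent = n) {x y : V}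
    (p : G.Walk x y) {a j : ZMod n} (hy : y = u j)
    (hxa : (G.deleteEdges (cycleEdgeSet u)).Reachable x (u a)) :
    (G.deleteEdges (cycleEdgeSet u)).dist x (u a) + (j - a).valMinAbs.natAbs ≤ p.length := by
  induction p generalizing a with
  | nil =>
    subst hy
    rw [eq_of_reachable_deleteEdges_cycleEdgeSet hG hcomp hxa]
    simp
  | @cons x y z hxy p ih =>
    rw [Walk.length_cons]
    by_cases hS : s(x, y) ∈ cycleEdgeSet u
    · obtain ⟨b, hb⟩ := hS
      rcases Sym2.eq_iff.mp hb with ⟨rfl, rfl⟩ | ⟨rfl, rfl⟩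
      · obtain rfl := eq_of_reachable_deleteEdges_cycleEdgeSet hG hcomp hxa.symm
        have h := ih hy (a := a + 1) .rfl
        have hstep := ZMod.natAbs_valMinAbs_add_one_le (j - (a + 1))
        rw [show j - (a + 1) + 1 = j - a by ring] at hstep
        simp only [dist_self, zero_add] at h ⊢
        omega
      · obtain rfl := eq_of_reachable_deleteEdges_cycleEdgeSet hG hcomp hxa.symm
        have h := ih hy (a := b) .rfl
        have hstep := ZMod.natAbs_valMinAbs_le_add_one (j - (b + 1))
        rw [show j - (b + 1) + 1 = j - b by ring] at hstep
        simp only [dist_self, zero_add] at h ⊢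
        omega
    · have hH : (G.deleteEdges (cycleEdgeSet u)).Adj x y := deleteEdges_adj.mpr ⟨hxy, hS⟩
      have hya := hH.reachable.symm.trans hxa
      have htri := hya.dist_triangle_right x
      rw [dist_eq_one_iff_adj.mpr hH] at htri
      have h := ih hy hya
      omega

lemma dist_eq_dist_deleteEdges_add_natAbs_valMinAbs (hG : G.Connected)
    (hadj : ∀ i, G.Adj (u i) (u (i + 1)))
    (hcomp : Nat.card (G.deleteEdges (cycleEdgeSet u)).ConnectedComponent = n) {x : V} {a : ZMod n}
    (hxa : (G.deleteEdges (cycleEdgeSet u)).Reachable x (u a)) (j : ZMod n) :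
    G.dist x (u j) =
      (G.deleteEdges (cycleEdgeSet u)).dist x (u a) + (j - a).valMinAbs.natAbs := by
  apply le_antisymm
  · calc G.dist x (u j) ≤ G.dist x (u a) + G.dist (u a) (u j) := hG.dist_triangle
      _ ≤ _ := add_le_add (hxa.dist_anti (deleteEdges_le _))
          (dist_cycle_le_natAbs_valMinAbs hadj a j)
  · obtain ⟨p, hp⟩ := hG.exists_walk_length_eq_dist x (u j)
    exact hp ▸ add_natAbs_valMinAbs_le_length hG hcomp p rfl hxa

lemma eDist_cycle_edge (hG : G.Connected) (hadj : ∀ i, G.Adj (u i) (u (i + 1)))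
    (hcomp : Nat.card (G.deleteEdges (cycleEdgeSet u)).ConnectedComponent = n) (b j : ZMod n) :
    eDist G s(u b, u (b + 1)) (u j) =
      min (j - b).valMinAbs.natAbs (j - (b + 1)).valMinAbs.natAbs := by
  simp only [eDist, Sym2.lift_mk,
    dist_eq_dist_deleteEdges_add_natAbs_valMinAbs hG hadj hcomp .rfl, dist_self, zero_add]

lemma eDist_eq_of_notMem_cycleEdgeSet (hG : G.Connected) (hadj : ∀ i, G.Adj (u i) (u (i + 1)))
    (hcomp : Nat.card (G.deleteEdges (cycleEdgeSet u)).ConnectedComponent = n) {x y : V}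
    (hxy : (G.deleteEdges (cycleEdgeSet u)).Adj x y) {a : ZMod n}
    (hxa : (G.deleteEdges (cycleEdgeSet u)).Reachable x (u a)) (j : ZMod n) :
    eDist G s(x, y) (u j) = min ((G.deleteEdges (cycleEdgeSet u)).dist x (u a))
      ((G.deleteEdges (cycleEdgeSet u)).dist y (u a)) + (j - a).valMinAbs.natAbs := by
  simp only [eDist, Sym2.lift_mk, dist_eq_dist_deleteEdges_add_natAbs_valMinAbs hG hadj hcomp hxa,
    dist_eq_dist_deleteEdges_add_natAbs_valMinAbs hG hadj hcomp (hxy.reachable.symm.trans hxa),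
    min_add_add_right]

section EvenCycle

variable {k : ℕ} [NeZero k] {u : ZMod (2 * k) → V}

lemma eDist_cycle_edge_lt_iff (hG : G.Connected) (hadj : ∀ i, G.Adj (u i) (u (i + 1)))
    (hcomp : Nat.card (G.deleteEdges (cycleEdgeSet u)).ConnectedComponent = 2 * k)
    (b i : ZMod (2 * k)) :
    eDist G s(u b, u (b + 1)) (u i) < eDist G s(u b, u (b + 1)) (u (i + 1)) ↔
      1 ≤ (i - b).val ∧ (i - b).val < k := by
  rw [eDist_cycle_edge hG hadj hcomp, eDist_cycle_edge hG hadj hcomp,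
    ← ZMod.min_natAbs_valMinAbs_lt_iff]
  ring_nf

lemma eDist_lt_eDist_add_one_iff_of_notMem_cycleEdgeSet (hG : G.Connected)
    (hadj : ∀ i, G.Adj (u i) (u (i + 1)))
    (hcomp : Nat.card (G.deleteEdges (cycleEdgeSet u)).ConnectedComponent = 2 * k) {x y : V}
    (hxy : (G.deleteEdges (cycleEdgeSet u)).Adj x y) {a : ZMod (2 * k)}
    (hxa : (G.deleteEdges (cycleEdgeSet u)).Reachable x (u a)) (i : ZMod (2 * k)) :
    eDist G s(x, y) (u i) < eDist G s(x, y) (u (i + 1)) ↔ (i - a).val < k := by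
  rw [eDist_eq_of_notMem_cycleEdgeSet hG hadj hcomp hxy hxa,
    eDist_eq_of_notMem_cycleEdgeSet hG hadj hcomp hxy hxa, Nat.add_lt_add_iff_left,
    add_sub_right_comm, ZMod.natAbs_valMinAbs_lt_add_one_iff]

theorem filter_eDist_lt_eDist_add_one_eq [Fintype V] (hG : G.Connected)
    (hadj : ∀ i, G.Adj (u i) (u (i + 1)))
    (hcomp : Nat.card (G.deleteEdges (cycleEdgeSet u)).ConnectedComponent = 2 * k)
    (i : ZMod (2 * k)) :
    (G.edgeFinset.filter fun f => eDist G f (u i) < eDist G f (u (i + 1))) =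
      ((Finset.range k).biUnion fun j =>
          compEdges (G.deleteEdges (cycleEdgeSet u))
            ((G.deleteEdges (cycleEdgeSet u)).connectedComponentMk
              (u (i - (j : ZMod (2 * k)))))) ∪
        ((Finset.range (k - 1)).image fun j =>
          s(u (i - (j : ZMod (2 * k))), u (i - (j : ZMod (2 * k)) - 1))) := by
  ext f
  induction f using Sym2.ind with | h x y => ?_
  -- `Finset.range (k - 1)` is coerced to a `Finset (ZMod (2 * k))` through its monad structure
  simp only [mem_filter, mem_union, mem_biUnion, mem_range, mem_image, compEdges, mem_edgeFinset,
    mem_edgeSet, bind_pure_comp, Finset.fmap_def, exists_exists_and_eq_and]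
  constructor
  · rintro ⟨hxy, hlt⟩
    by_cases hS : s(x, y) ∈ cycleEdgeSet u
    · obtain ⟨b, hb⟩ := hS
      rw [hb, eDist_cycle_edge_lt_iff hG hadj hcomp] at hlt
      refine Or.inr ⟨(i - b).val - 1, by omega, ?_⟩
      rw [hb, Nat.cast_pred (by omega), ZMod.natCast_zmod_val, Sym2.eq_swap (a := u b)]
      congr 2 <;> ring
    · have hH : (G.deleteEdges (cycleEdgeSet u)).Adj x y := deleteEdges_adj.mpr ⟨hxy, hS⟩
      obtain ⟨a, hxa⟩ := exists_reachable_deleteEdges_cycleEdgeSet hG x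
      rw [eDist_lt_eDist_add_one_iff_of_notMem_cycleEdgeSet hG hadj hcomp hH hxa] at hlt
      refine Or.inl ⟨(i - a).val, hlt, hH, fun z hz => ?_⟩
      rw [ZMod.natCast_zmod_val, sub_sub_cancel]
      rcases Sym2.mem_iff.mp hz with rfl | rfl
      exacts [ConnectedComponent.sound hxa, ConnectedComponent.sound (hH.reachable.symm.trans hxa)]
  · rintro (⟨j, hj, hH, hcomp'⟩ | ⟨j, hj, hf⟩)
    · have hxa := ConnectedComponent.exact (hcomp' x (Sym2.mem_mk_left x y))
      refine ⟨(deleteEdges_adj.mp hH).1, ?_⟩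
      rw [eDist_lt_eDist_add_one_iff_of_notMem_cycleEdgeSet hG hadj hcomp hH hxa, sub_sub_cancel,
        ZMod.val_natCast_of_lt (by omega)]
      exact hj
    · have hb : s(x, y) = s(u (i - j - 1), u (i - j - 1 + 1)) := by
        rw [← hf, Sym2.eq_swap, sub_add_cancel]
      have hxy := hadj (i - j - 1)
      rw [← mem_edgeSet, ← hb] at hxy
      refine ⟨hxy, ?_⟩
      rw [hb, eDist_cycle_edge_lt_iff hG hadj hcomp,
        show i - (i - j - 1) = ((j + 1 : ℕ) : ZMod (2 * k)) by push_cast; ring,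
        ZMod.val_natCast_of_lt (by omega)]
      omega

end EvenCycle

end SimpleGraph

end

theorem stmt5_general {V : Type*} [Fintype V] (G : SimpleGraph V) (hG : G.Connected)
    (k : ℕ) (u : ZMod (2 * k) → V)
    (hadj : ∀ i, G.Adj (u i) (u (i + 1)))
    (S : Set (Sym2 V)) (hS : S = {f | ∃ i, f = s(u i, u (i + 1))})
    (hcomp : Nat.card (G.deleteEdges S).ConnectedComponent = 2 * k)
    (i : ZMod (2 * k)) :
    (G.edgeFinset.filter fun f => eDist G f (u i) < eDist G f (u (i + 1))) =
      ((Finset.range k).biUnion fun j =>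
          compEdges (G.deleteEdges S)
            ((G.deleteEdges S).connectedComponentMk (u (i - (j : ZMod (2 * k)))))) ∪
        ((Finset.range (k - 1)).image fun j =>
          s(u (i - (j : ZMod (2 * k))), u (i - (j : ZMod (2 * k)) - 1))) ∧
    (G.edgeFinset.filter fun f => eDist G f (u (i + 1)) < eDist G f (u i)) =
      ((Finset.range k).biUnion fun j =>
          compEdges (G.deleteEdges S)
            ((G.deleteEdges S).connectedComponentMk (u (i + 1 + (j : ZMod (2 * k)))))) ∪
        ((Finset.range (k - 1)).image fun j =>
          s(u (i + 1 + (j : ZMod (2 * k))), u (i + 2 + (j : ZMod (2 * k)))))  := by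
  have : NeZero k := ⟨by
    rintro rfl
    have : Nonempty V := hG.nonempty
    exact Nat.card_pos.ne' hcomp⟩
  change S = cycleEdgeSet u at hS
  subst hS
  refine ⟨SimpleGraph.filter_eDist_lt_eDist_add_one_eq hG hadj hcomp i, ?_⟩
  have hadj_rev : ∀ j, G.Adj (u (-j)) (u (-(j + 1))) := fun j => by
    simpa [add_comm] using (hadj (-(j + 1))).symm
  have hrev := SimpleGraph.filter_eDist_lt_eDist_add_one_eq (u := fun j => u (-j)) hG hadj_rev
    (by rwa [cycleEdgeSet_comp_neg]) (-(i + 1))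
  have hi : -(-(i + 1) + 1) = i := by ring
  have hl : ∀ j : ZMod (2 * k), -(-(i + 1) - j) = i + 1 + j := fun j => by ring
  have hr : ∀ j : ZMod (2 * k), -(-(i + 1) - j - 1) = i + 2 + j := fun j => by ring
  rw [cycleEdgeSet_comp_neg] at hrev
  simpa only [neg_neg, hi, hl, hr] using hrev

/-- for an even cycle `C_{2k} = u_0 u_1 ⋯ u_{2k-1} u_0` in a connected graph `G`
such that `G − E(C_{2k})` has exactly `2k` connected components, the set
`M_{u_i}(u_i u_{i+1}|G)` consists of the edges of the components
`G_i, G_{i-1}, …, G_{i-k+1}` together with the `k − 1` cycle edges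
`u_i u_{i-1}, …, u_{i-k+2} u_{i-k+1}`, and symmetrically for `M_{u_{i+1}}`. -/
theorem stmt5 {V : Type*} [Fintype V] (G : SimpleGraph V) (hG : G.Connected)
    (k : ℕ) (hk : 2 ≤ k) (u : ZMod (2 * k) → V) (hinj : Function.Injective u)
    (hadj : ∀ i, G.Adj (u i) (u (i + 1)))
    (S : Set (Sym2 V)) (hS : S = {f | ∃ i, f = s(u i, u (i + 1))})
    (hcomp : Nat.card (G.deleteEdges S).ConnectedComponent = 2 * k)
    (i : ZMod (2 * k)) :
    (G.edgeFinset.filter fun f => eDist G f (u i) < eDist G f (u (i + 1))) =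
      ((Finset.range k).biUnion fun j =>
          compEdges (G.deleteEdges S)
            ((G.deleteEdges S).connectedComponentMk (u (i - (j : ZMod (2 * k)))))) ∪
        ((Finset.range (k - 1)).image fun j =>
          s(u (i - (j : ZMod (2 * k))), u (i - (j : ZMod (2 * k)) - 1))) ∧
    (G.edgeFinset.filter fun f => eDist G f (u (i + 1)) < eDist G f (u i)) =
      ((Finset.range k).biUnion fun j =>
          compEdges (G.deleteEdges S)
            ((G.deleteEdges S).connectedComponentMk (u (i + 1 + (j : ZMod (2 * k)))))) ∪
        ((Finset.range (k - 1)).image fun j =>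
          s(u (i + 1 + (j : ZMod (2 * k))), u (i + 2 + (j : ZMod (2 * k))))) :=
  stmt5_general G hG k u hadj S hS hcomp i
end

section
/- Let G be a connected graph with m edges containing an even cycle C_{2k} such that G − E(C_{2k}) has exactly 2k connected components. Then Σ_{e=uv ∈ C_{2k}} (m_u(e|G) − m_v(e|G))² ≤ 2k(m − 2k)², with equality if and only if C_{2k} is an end-block (at most one component of G − E(C_{2k}) contains an edge). -/
open scoped Classical
open Finset

/-!
Deleting the edges of the cycle `C = u₀ u₁ ⋯ u_{2k-1}` leaves `2k` components, so each contains
exactly one cycle vertex and every path out of the component of `uᵢ` passes through `uᵢ`. Hence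
`d(x, uⱼ) = d(x, uᵢ) + d_C(uᵢ, uⱼ)` for `x` in that component. An edge of the `i`-th component is
therefore closer to `uⱼ` than to `uⱼ₊₁` exactly when `uᵢ` lies in the half of `C` on the side of
`uⱼ`, while the cycle edges cancel in pairs under the reflection of `C` fixing the edge `uⱼ uⱼ₊₁`.
Thus `m_{uⱼ} - m_{uⱼ₊₁} = Pⱼ - Qⱼ`, where `Pⱼ + Qⱼ = m - 2k` count the non-cycle edges on either
side, and `(Pⱼ - Qⱼ)² ≤ (m - 2k)²` with equality iff `Pⱼ Qⱼ = 0`. Any two distinct components are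
separated by some half of `C`, so equality for every `j` forces at most one component to carry
edges.
-/

namespace ZMod

def cycDist {n : ℕ} (d : ZMod n) : ℕ := min d.val (-d).val

@[simp] lemma cycDist_zero {n : ℕ} : cycDist (0 : ZMod n) = 0 := by simp [cycDist]

lemma cycDist_neg {n : ℕ} (d : ZMod n) : cycDist (-d) = cycDist d := by
  rw [cycDist, cycDist, neg_neg, min_comm]

variable {k : ℕ} [NeZero k]

lemma cycDist_add_one_sub (d : ZMod (2 * k)) :
    (cycDist (d + 1) : ℤ) - cycDist d = if d.val < k then 1 else -1 := by
  have hk : 0 < k := Nat.pos_of_neZero k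
  have : Fact (1 < 2 * k) := ⟨by omega⟩
  have hd := d.val_lt
  have hsucc : (d + 1).val = (d.val + 1) % (2 * k) := by rw [val_add, val_one]
  simp only [cycDist, neg_val, ← val_eq_zero, hsucc]
  rcases Nat.lt_or_ge (d.val + 1) (2 * k) with h | h
  · rw [Nat.mod_eq_of_lt h, if_neg d.val.succ_ne_zero]
    split_ifs <;> omega
  · have hd1 : d.val = 2 * k - 1 := by omega
    simp only [hd1, Nat.sub_add_cancel (by omega : 1 ≤ 2 * k), Nat.mod_self]
    split_ifs <;> omega

lemma cycDist_add_one_le (d : ZMod (2 * k)) : cycDist (d + 1) ≤ cycDist d + 1 := by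
  have := cycDist_add_one_sub d
  split_ifs at this <;> omega

lemma cycDist_sub_one_le (d : ZMod (2 * k)) : cycDist (d - 1) ≤ cycDist d + 1 := by
  have := cycDist_add_one_sub (d - 1)
  rw [sub_add_cancel] at this
  split_ifs at this <;> omega

lemma subsingleton_iff_forall_half {T : Set (ZMod (2 * k))} : T.Subsingleton ↔
    ∀ j : ZMod (2 * k), (∀ i, (j - i).val < k → i ∉ T) ∨ (∀ i, ¬(j - i).val < k → i ∉ T) := by
  constructor
  · intro hT j
    by_contra! h
    obtain ⟨⟨i, hi, hiT⟩, ⟨i', hi', hi'T⟩⟩ := h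
    rw [hT hi'T hiT] at hi'
    omega
  · intro h i hi i' hi'
    by_contra hne
    wlog hle : k ≤ (i - i').val generalizing i i'
    · refine this hi' hi (Ne.symm hne) ?_
      have hsum : (i - i').val + (i' - i).val = 2 * k := by
        rw [← neg_sub i i', neg_val, if_neg (sub_ne_zero.mpr hne)]
        have := (i - i').val_lt
        omega
      omega
    rcases h i with h | h
    · exact h i (by simp [Nat.pos_of_neZero k]) hi
    · exact h i' (by omega) hi'

end ZMod

section HalfSums

variable {ι : Type*} [Fintype ι] (a : ι → ℕ) (p : ι → Prop) [DecidablePred p]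

lemma sum_ite_neg_natCast :
    (∑ i, if p i then (a i : ℤ) else -a i) =
      ((∑ i with p i, a i : ℕ) : ℤ) - (∑ i with ¬p i, a i : ℕ) := by
  rw [sum_ite, sum_neg_distrib, sub_eq_add_neg]
  push_cast
  rfl

lemma sum_natCast_eq_add :
    (∑ i, (a i : ℤ)) = ((∑ i with p i, a i : ℕ) : ℤ) + (∑ i with ¬p i, a i : ℕ) := by
  rw [← Nat.cast_add, sum_filter_add_sum_filter_not, Nat.cast_sum]

lemma sq_sum_ite_neg_le : (∑ i, if p i then (a i : ℤ) else -a i) ^ 2 ≤ (∑ i, (a i : ℤ)) ^ 2 := by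
  rw [sum_ite_neg_natCast, sum_natCast_eq_add a p]
  nlinarith [mul_nonneg (Nat.cast_nonneg (α := ℤ) (∑ i with p i, a i))
    (Nat.cast_nonneg (α := ℤ) (∑ i with ¬p i, a i))]

lemma sq_sum_ite_neg_eq_iff : (∑ i, if p i then (a i : ℤ) else -a i) ^ 2 = (∑ i, (a i : ℤ)) ^ 2 ↔
    (∀ i, p i → a i = 0) ∨ (∀ i, ¬p i → a i = 0) := by
  rw [sum_ite_neg_natCast, sum_natCast_eq_add a p]
  have key : ∀ P Q : ℕ, ((P : ℤ) - Q) ^ 2 = ((P : ℤ) + Q) ^ 2 ↔ P = 0 ∨ Q = 0 := by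
    intro P Q
    rw [← mul_eq_zero (M₀ := ℕ), ← Nat.cast_inj (R := ℤ)]
    push_cast
    constructor <;> intro h <;> linarith
  rw [key, sum_eq_zero_iff, sum_eq_zero_iff]
  simp only [mem_filter, mem_univ, true_and]

lemma sum_range_sq_le_and_eq_iff_subsingleton {k : ℕ} [NeZero k] (a : ZMod (2 * k) → ℕ) (D : ZMod (2 * k) → ℤ)
    (hD : ∀ j, D j = ∑ i, if (j - i).val < k then (a i : ℤ) else -a i) :
    ∑ j ∈ range (2 * k), D j ^ 2 ≤ 2 * k * (∑ i, (a i : ℤ)) ^ 2 ∧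
      (∑ j ∈ range (2 * k), D j ^ 2 = 2 * k * (∑ i, (a i : ℤ)) ^ 2 ↔
        {i | a i ≠ 0}.Subsingleton) := by
  have hterm : ∀ j ∈ range (2 * k), D j ^ 2 ≤ (∑ i, (a i : ℤ)) ^ 2 :=
    fun j _ => hD j ▸ sq_sum_ite_neg_le a _
  rw [show 2 * k * (∑ i, (a i : ℤ)) ^ 2 = ∑ _j ∈ range (2 * k), (∑ i, (a i : ℤ)) ^ 2 by simp,
    sum_eq_sum_iff_of_le hterm, ZMod.subsingleton_iff_forall_half]
  refine ⟨sum_le_sum hterm, ?_⟩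
  simp only [Set.mem_ofPred_eq, not_not, ← sq_sum_ite_neg_eq_iff, ← hD]
  exact ⟨fun h j => by simpa using h j.val (mem_range.2 j.val_lt), fun h j _ => h j⟩

end HalfSums

lemma mCloser_sub_mCloser {V : Type*} [Fintype V] (G : SimpleGraph V) (a b : V) :
    (mCloser G a b : ℤ) - mCloser G b a =
      ∑ f ∈ G.edgeFinset, Int.sign ((eDist G f b : ℤ) - eDist G f a) := by
  simp only [mCloser, card_filter, Nat.cast_sum, ← sum_sub_distrib]
  refine sum_congr rfl fun f _ => ?_
  rcases lt_trichotomy (eDist G f a) (eDist G f b) with h | h | h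
  · simp [h, h.not_gt, Int.sign_eq_one_of_pos (sub_pos.mpr (Nat.cast_lt.mpr h))]
  · simp [h]
  · simp [h, h.not_gt, Int.sign_eq_neg_one_of_neg (sub_neg.mpr (Nat.cast_lt.mpr h))]

lemma mem_compEdges {V : Type*} [Fintype V] {G : SimpleGraph V} {c : G.ConnectedComponent}
    {f : Sym2 V} : f ∈ compEdges G c ↔ f ∈ G.edgeSet ∧ ∀ x ∈ f, G.connectedComponentMk x = c := by
  simp [compEdges]

lemma sum_sum_compEdges {V M : Type*} [Fintype V] [AddCommMonoid M] (G : SimpleGraph V)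
    [Fintype G.ConnectedComponent] (φ : Sym2 V → M) :
    ∑ c, ∑ f ∈ compEdges G c, φ f = ∑ f ∈ G.edgeFinset, φ f := by
  rw [← sum_biUnion]
  · congr 1
    ext f
    simp only [compEdges, mem_biUnion, mem_filter, mem_univ, true_and]
    refine ⟨fun ⟨_, hf, _⟩ => hf, fun hf => ?_⟩
    induction f using Sym2.ind with
    | _ x y =>
      refine ⟨G.connectedComponentMk x, hf, fun z hz => ?_⟩
      rcases Sym2.mem_iff.mp hz with rfl | rfl
      · rfl
      · exact (SimpleGraph.ConnectedComponent.connectedComponentMk_eq_of_adj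
          (SimpleGraph.mem_edgeFinset.mp hf)).symm
  · intro c _ c' _ hcc'
    refine disjoint_left.mpr fun f hf hf' => hcc' ?_
    rw [← (mem_compEdges.mp hf).2 _ f.out_fst_mem, (mem_compEdges.mp hf').2 _ f.out_fst_mem]

namespace SimpleGraph

open ZMod

variable {V : Type*} {G : SimpleGraph V} {n k : ℕ}

lemma Connected.dist_le_cycDist [NeZero n] (hG : G.Connected) {u : ZMod n → V}
    (hadj : ∀ i, G.Adj (u i) (u (i + 1))) (i j : ZMod n) :
    G.dist (u i) (u j) ≤ cycDist (j - i) := by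
  have forward : ∀ (t : ℕ) (i : ZMod n), G.dist (u i) (u (i + t)) ≤ t := by
    intro t
    induction t with
    | zero => simp
    | succ t ih =>
      intro i
      calc G.dist (u i) (u (i + (t + 1 : ℕ)))
          ≤ G.dist (u i) (u (i + t)) + G.dist (u (i + t)) (u (i + t + 1)) := by
            push_cast; rw [← add_assoc]; exact hG.dist_triangle
        _ ≤ t + 1 := add_le_add (ih i) (dist_eq_one_iff_adj.mpr (hadj _)).le
  have h₁ := forward (j - i).val i
  have h₂ := forward (-(j - i)).val j
  rw [natCast_zmod_val, add_sub_cancel] at h₁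
  rw [natCast_zmod_val, show j + -(j - i) = i by ring, dist_comm] at h₂
  exact le_min h₁ h₂

/-- Models the situation of the theorem: `π x` is the index of the cycle vertex whose component of
`G - E(C)` contains `x`. -/
structure IsCycleProjection (G : SimpleGraph V) (u : ZMod n → V) (π : V → ZMod n) : Prop where
  apply_cycle : ∀ l, π (u l) = l
  eq_cycle_of_adj : ∀ ⦃x y⦄, G.Adj x y → π x ≠ π y → x = u (π x)
  adj_succ : ∀ ⦃x y⦄, G.Adj x y → π x ≠ π y → π y = π x + 1 ∨ π x = π y + 1

namespace IsCycleProjection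

variable {u : ZMod n → V} {π : V → ZMod n}

lemma mem_support (hπ : IsCycleProjection G u π) {x y : V} (w : G.Walk x y) (hxy : π x ≠ π y) :
    u (π x) ∈ w.support := by
  induction w with
  | nil => exact absurd rfl hxy
  | @cons x y z h p ih =>
    by_cases hx : π x = π y
    · rw [hx] at hxy ⊢
      exact List.mem_cons_of_mem _ (ih hxy)
    · rw [← hπ.eq_cycle_of_adj h hx]
      exact p.support.mem_cons_self

variable [NeZero k] {u : ZMod (2 * k) → V} {π : V → ZMod (2 * k)}

lemma cycDist_le_length (hπ : IsCycleProjection G u π) {x y : V} (w : G.Walk x y) :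
    cycDist (π y - π x) ≤ w.length := by
  induction w with
  | nil => simp
  | @cons x y z h p ih =>
    rw [Walk.length_cons]
    by_cases hx : π x = π y
    · rw [hx]; omega
    rcases hπ.adj_succ h hx with hy | hy
    · calc cycDist (π z - π x) = cycDist (π z - π y + 1) := by rw [hy]; ring_nf
        _ ≤ cycDist (π z - π y) + 1 := cycDist_add_one_le _
        _ ≤ p.length + 1 := by omega
    · calc cycDist (π z - π x) = cycDist (π z - π y - 1) := by rw [hy]; ring_nf
        _ ≤ cycDist (π z - π y) + 1 := cycDist_sub_one_le _
        _ ≤ p.length + 1 := by omega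

lemma dist_eq_add_cycDist (hπ : IsCycleProjection G u π) (hG : G.Connected)
    (hadj : ∀ i, G.Adj (u i) (u (i + 1))) (x : V) (j : ZMod (2 * k)) :
    G.dist x (u j) = G.dist x (u (π x)) + cycDist (j - π x) := by
  apply le_antisymm
  · exact hG.dist_triangle.trans (Nat.add_le_add_left (hG.dist_le_cycDist hadj _ _) _)
  by_cases hj : π x = j
  · simp [hj]
  obtain ⟨w, hw⟩ := (hG x (u j)).exists_walk_length_eq_dist
  have hmem := hπ.mem_support w (by rwa [hπ.apply_cycle])
  have hdrop := hπ.cycDist_le_length (w.dropUntil _ hmem)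
  rw [hπ.apply_cycle, hπ.apply_cycle] at hdrop
  rw [← hw, ← w.take_spec hmem, Walk.length_append]
  exact Nat.add_le_add (dist_le _) hdrop

lemma dist_cycle (hπ : IsCycleProjection G u π) (hG : G.Connected)
    (hadj : ∀ i, G.Adj (u i) (u (i + 1))) (i j : ZMod (2 * k)) :
    G.dist (u i) (u j) = cycDist (j - i) := by
  rw [hπ.dist_eq_add_cycDist hG hadj, hπ.apply_cycle, dist_self, zero_add]

lemma eDist_eq_add_cycDist (hπ : IsCycleProjection G u π) (hG : G.Connected)
    (hadj : ∀ i, G.Adj (u i) (u (i + 1))) {f : Sym2 V} {i : ZMod (2 * k)}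
    (hf : ∀ x ∈ f, π x = i) (j : ZMod (2 * k)) :
    eDist G f (u j) = eDist G f (u i) + cycDist (j - i) := by
  induction f using Sym2.ind with
  | _ x y =>
    change min _ _ = min _ _ + _
    rw [hπ.dist_eq_add_cycDist hG hadj x, hπ.dist_eq_add_cycDist hG hadj y,
      hf x (Sym2.mem_mk_left x y), hf y (Sym2.mem_mk_right x y), min_add_add_right]

lemma sum_sign_cycle_eq_zero (hπ : IsCycleProjection G u π) (hG : G.Connected)
    (hadj : ∀ i, G.Adj (u i) (u (i + 1))) (j : ZMod (2 * k)) :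
    ∑ l, Int.sign ((eDist G s(u l, u (l + 1)) (u (j + 1)) : ℤ) - eDist G s(u l, u (l + 1)) (u j))
      = 0 := by
  have hcycle : ∀ l j', eDist G s(u l, u (l + 1)) (u j') =
      min (cycDist (j' - l)) (cycDist (j' - (l + 1))) := fun l j' => by
    change min _ _ = _
    rw [hπ.dist_cycle hG hadj, hπ.dist_cycle hG hadj]
  -- reflecting the cycle in the edge `u j u (j + 1)` swaps the roles of its two endpoints
  have hreflect : ∀ l j', eDist G s(u (j + j - l), u (j + j - l + 1)) (u j') =
      eDist G s(u l, u (l + 1)) (u (j + j + 1 - j')) := fun l j' => by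
    rw [hcycle, hcycle, min_comm, ← cycDist_neg, ← cycDist_neg (j' - _)]
    ring_nf
  set F : ZMod (2 * k) → ℤ := fun l =>
    Int.sign ((eDist G s(u l, u (l + 1)) (u (j + 1)) : ℤ) - eDist G s(u l, u (l + 1)) (u j))
  have hF : ∀ l, F l = -F (j + j - l) := fun l => by
    simp only [F, hreflect, ← Int.sign_neg, neg_sub]
    ring_nf
  have hsum := Fintype.sum_equiv (Equiv.subLeft (j + j)) F (fun l => -F l) hF
  rw [Finset.sum_neg_distrib] at hsum
  linarith

lemma sign_eDist_succ_sub (hπ : IsCycleProjection G u π) (hG : G.Connected)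
    (hadj : ∀ i, G.Adj (u i) (u (i + 1))) {f : Sym2 V} {i : ZMod (2 * k)}
    (hf : ∀ x ∈ f, π x = i) (j : ZMod (2 * k)) :
    Int.sign ((eDist G f (u (j + 1)) : ℤ) - eDist G f (u j)) =
      if (j - i).val < k then 1 else -1 := by
  rw [hπ.eDist_eq_add_cycDist hG hadj hf (j + 1), hπ.eDist_eq_add_cycDist hG hadj hf j,
    show j + 1 - i = j - i + 1 by ring]
  push_cast
  rw [add_sub_add_left_eq_sub, cycDist_add_one_sub]
  split_ifs <;> rfl

end IsCycleProjection

lemma Connected.exists_reachable_deleteEdges (hG : G.Connected) {S : Set (Sym2 V)} {T : Set V}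
    (hT : T.Nonempty) (hST : ∀ f ∈ S, ∀ x ∈ f, x ∈ T) (x : V) :
    ∃ t ∈ T, (G.deleteEdges S).Reachable x t := by
  obtain ⟨t, ht⟩ := hT
  obtain ⟨w⟩ := hG.preconnected x t
  induction w with
  | nil => exact ⟨_, ht, Reachable.refl _⟩
  | @cons x y _ h _ ih =>
    obtain ⟨t', ht', hyt'⟩ := ih ht
    by_cases hxy : s(x, y) ∈ S
    · exact ⟨x, hST _ hxy x (Sym2.mem_mk_left x y), Reachable.refl _⟩
    · exact ⟨t', ht', (deleteEdges_adj.mpr ⟨h, hxy⟩).reachable.trans hyt'⟩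

variable [NeZero n]

noncomputable def cycleEdges (u : ZMod n → V) : Finset (Sym2 V) :=
  univ.image fun l => s(u l, u (l + 1))

variable {u : ZMod n → V}

lemma coe_cycleEdges : (cycleEdges u : Set (Sym2 V)) = {f | ∃ i, f = s(u i, u (i + 1))} := by
  ext f
  simp [cycleEdges, eq_comm]

lemma cycleEdges_subset [Fintype V] (hadj : ∀ i, G.Adj (u i) (u (i + 1))) :
    cycleEdges u ⊆ G.edgeFinset := by
  simp [cycleEdges, subset_iff, hadj]

lemma sum_cycleEdges {M : Type*} [AddCommMonoid M] (hn : 2 < n)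
    (hinj : Function.Injective u) (φ : Sym2 V → M) :
    ∑ f ∈ cycleEdges u, φ f = ∑ l, φ s(u l, u (l + 1)) := by
  refine sum_image fun a _ b _ hab => ?_
  rcases Sym2.eq_iff.mp hab with ⟨h, _⟩ | ⟨h₁, h₂⟩
  · exact hinj h
  · -- an edge read backwards would force `2 = 0` in `ZMod n`
    have h2 : ((2 : ℕ) : ZMod n) = 0 := by
      have h := hinj h₂
      rw [hinj h₁] at h
      push_cast
      linear_combination h
    rw [ZMod.natCast_eq_zero_iff] at h2
    exact absurd (Nat.le_of_dvd two_pos h2) (by omega)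

lemma sum_edgeFinset_eq_sum_cycle_add [Fintype V] {M : Type*} [AddCommMonoid M] (hn : 2 < n)
    (hinj : Function.Injective u) (hadj : ∀ i, G.Adj (u i) (u (i + 1))) (φ : Sym2 V → M) :
    ∑ f ∈ G.edgeFinset, φ f = ∑ l, φ s(u l, u (l + 1)) +
      ∑ c, ∑ f ∈ compEdges (G.deleteEdges (cycleEdges u)) c, φ f := by
  rw [sum_sum_compEdges, edgeFinset_deleteEdges, ← sum_cycleEdges hn hinj, add_comm,
    sum_sdiff (cycleEdges_subset hadj)]

lemma bijective_connectedComponentMk_cycle (hG : G.Connected)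
    (hcomp : Nat.card (G.deleteEdges (cycleEdges u)).ConnectedComponent = n) :
    Function.Bijective fun i => (G.deleteEdges (cycleEdges u)).connectedComponentMk (u i) := by
  refine (Nat.bijective_iff_surjective_and_card _).mpr ⟨fun c => ?_, by rw [hcomp, Nat.card_zmod]⟩
  obtain ⟨x, rfl⟩ := c.exists_rep
  have hends : ∀ f ∈ (cycleEdges u : Set (Sym2 V)), ∀ y ∈ f, y ∈ Set.range u := by
    rw [coe_cycleEdges]
    rintro _ ⟨l, rfl⟩ y hy
    rcases Sym2.mem_iff.mp hy with rfl | rfl <;> exact ⟨_, rfl⟩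
  obtain ⟨_, ⟨i, rfl⟩, hx⟩ := hG.exists_reachable_deleteEdges (Set.range_nonempty u) hends x
  exact ⟨i, (ConnectedComponent.sound hx).symm⟩

lemma isCycleProjection_of_equiv
    (e : ZMod n ≃ (G.deleteEdges (cycleEdges u)).ConnectedComponent)
    (he : ∀ i, e i = (G.deleteEdges (cycleEdges u)).connectedComponentMk (u i)) :
    IsCycleProjection G u
      fun x => e.symm ((G.deleteEdges (cycleEdges u)).connectedComponentMk x) := by
  have hcycle : ∀ l, e.symm ((G.deleteEdges (cycleEdges u)).connectedComponentMk (u l)) = l :=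
    fun l => by rw [← he, e.symm_apply_apply]
  have hcross : ∀ ⦃x y⦄, G.Adj x y →
      e.symm ((G.deleteEdges (cycleEdges u)).connectedComponentMk x) ≠
        e.symm ((G.deleteEdges (cycleEdges u)).connectedComponentMk y) →
      ∃ l, (x = u l ∧ y = u (l + 1)) ∨ (x = u (l + 1) ∧ y = u l) := by
    intro x y hxy hne
    have hmem : s(x, y) ∈ (cycleEdges u : Set (Sym2 V)) := by
      by_contra hmem
      exact hne (congrArg e.symm (ConnectedComponent.connectedComponentMk_eq_of_adj
        (deleteEdges_adj.mpr ⟨hxy, hmem⟩)))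
    rw [coe_cycleEdges] at hmem
    obtain ⟨l, hl⟩ := hmem
    exact ⟨l, Sym2.eq_iff.mp hl⟩
  refine ⟨hcycle, fun x y hxy hne => ?_, fun x y hxy hne => ?_⟩
  · obtain ⟨l, ⟨rfl, rfl⟩ | ⟨rfl, rfl⟩⟩ := hcross hxy hne <;> rw [hcycle]
  · obtain ⟨l, ⟨rfl, rfl⟩ | ⟨rfl, rfl⟩⟩ := hcross hxy hne <;> simp [hcycle]

lemma card_edgeFinset_eq_add [Fintype V] (hn : 2 < n) (hinj : Function.Injective u)
    (hadj : ∀ i, G.Adj (u i) (u (i + 1)))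
    (e : ZMod n ≃ (G.deleteEdges (cycleEdges u)).ConnectedComponent) :
    #G.edgeFinset = n + ∑ i, #(compEdges (G.deleteEdges (cycleEdges u)) (e i)) := by
  rw [card_eq_sum_ones, sum_edgeFinset_eq_sum_cycle_add hn hinj hadj, ← e.sum_comp]
  simp

end SimpleGraph

open SimpleGraph

lemma mCloser_sub_mCloser_eq_sum_ite {V : Type*} [Fintype V] {G : SimpleGraph V} {k : ℕ}
    [NeZero k] {u : ZMod (2 * k) → V} (hk : 2 ≤ k) (hG : G.Connected)
    (hinj : Function.Injective u) (hadj : ∀ i, G.Adj (u i) (u (i + 1)))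
    (e : ZMod (2 * k) ≃ (G.deleteEdges (cycleEdges u)).ConnectedComponent)
    (he : ∀ i, e i = (G.deleteEdges (cycleEdges u)).connectedComponentMk (u i)) (j : ZMod (2 * k)) :
    (mCloser G (u j) (u (j + 1)) : ℤ) - mCloser G (u (j + 1)) (u j) =
      ∑ i, if (j - i).val < k then (#(compEdges (G.deleteEdges (cycleEdges u)) (e i)) : ℤ)
        else -#(compEdges (G.deleteEdges (cycleEdges u)) (e i)) := by
  have hπ := isCycleProjection_of_equiv e he
  rw [mCloser_sub_mCloser, sum_edgeFinset_eq_sum_cycle_add (by omega) hinj hadj,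
    hπ.sum_sign_cycle_eq_zero hG hadj, zero_add, ← e.sum_comp]
  refine sum_congr rfl fun i _ => ?_
  rw [sum_congr rfl fun f hf => hπ.sign_eDist_succ_sub hG hadj
    (fun x hx => e.symm_apply_eq.mpr ((mem_compEdges.mp hf).2 x hx)) j]
  split_ifs <;> simp

/-- even-cycle bound
`Σ_{e=uv ∈ C_{2k}} (m_u(e|G) − m_v(e|G))² ≤ 2k(m − 2k)²`, with equality iff `C_{2k}` is an
end-block, i.e. at most one component of `G − E(C_{2k})` contains an edge. -/
theorem stmt6 {V : Type*} [Fintype V] (G : SimpleGraph V) (hG : G.Connected)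
    (k : ℕ) (hk : 2 ≤ k) (u : ZMod (2 * k) → V) (hinj : Function.Injective u)
    (hadj : ∀ i, G.Adj (u i) (u (i + 1)))
    (S : Set (Sym2 V)) (hS : S = {f | ∃ i, f = s(u i, u (i + 1))})
    (hcomp : Nat.card (G.deleteEdges S).ConnectedComponent = 2 * k) :
    (∑ j ∈ Finset.range (2 * k),
        ((mCloser G (u j) (u (j + 1)) : ℤ) - (mCloser G (u (j + 1)) (u j) : ℤ)) ^ 2) ≤
      2 * k * ((G.edgeFinset.card : ℤ) - 2 * k) ^ 2 ∧
    ((∑ j ∈ Finset.range (2 * k),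
        ((mCloser G (u j) (u (j + 1)) : ℤ) - (mCloser G (u (j + 1)) (u j) : ℤ)) ^ 2) =
      2 * k * ((G.edgeFinset.card : ℤ) - 2 * k) ^ 2 ↔
      {c : (G.deleteEdges S).ConnectedComponent |
        (compEdges (G.deleteEdges S) c).Nonempty}.Subsingleton) := by
  have : NeZero k := ⟨by omega⟩
  subst hS
  rw [← coe_cycleEdges] at hcomp ⊢
  let e := Equiv.ofBijective _ (bijective_connectedComponentMk_cycle hG hcomp)
  have hD := mCloser_sub_mCloser_eq_sum_ite hk hG hinj hadj e fun _ => rfl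
  set a : ZMod (2 * k) → ℕ := fun i => #(compEdges (G.deleteEdges (cycleEdges u)) (e i))
  have hM : (#G.edgeFinset : ℤ) - 2 * k = ∑ i, (a i : ℤ) := by
    rw [card_edgeFinset_eq_add (by omega) hinj hadj e]
    push_cast
    ring
  have hsupp : {c | (compEdges (G.deleteEdges (cycleEdges u)) c).Nonempty} =
      e '' {i | a i ≠ 0} := by
    ext c
    obtain ⟨i, rfl⟩ := e.surjective c
    simp [a, nonempty_iff_ne_empty]
  rw [hM, hsupp, e.injective.subsingleton_image_iff]
  exact sum_range_sq_le_and_eq_iff_subsingleton a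
    (fun j => (mCloser G (u j) (u (j + 1)) : ℤ) - mCloser G (u (j + 1)) (u j)) hD
end
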